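/- For any r > 0 and positive integer k, if 0 < ε < 1/(2r^{2k}), then for all x ≥ 0: 1/(1+ε(x-r)^{2k})^2 ≤ 16^k/(1+ε x^{2k})^2. -/
import Mathlib


theorem stmt_0 (r : ℝ) (hr : 0 < r) (k : ℕ) (hk : 0 < k) (ε : ℝ)
    (hε0 : 0 < ε) (hε : ε < 1 / (2 * r ^ (2 * k))) :
    ∀ x : ℝ, 0 ≤ x →
      1 / (1 + ε * (x - r) ^ (2 * k)) ^ 2 ≤ 16 ^ k / (1 + ε * x ^ (2 * k)) ^ 2 := by
  intro x hx
  have heven : Even (2 * k) := even_two_mul k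
  have hy0 : (0:ℝ) ≤ (x - r) ^ (2 * k) := heven.pow_nonneg _
  have hA0 : (0:ℝ) < 1 + ε * (x - r) ^ (2 * k) := by positivity
  have hB0 : (0:ℝ) < 1 + ε * x ^ (2 * k) := by positivity
  have hrpow : (0:ℝ) < r ^ (2 * k) := by positivity
  have hεr : ε * r ^ (2 * k) < 1 / 2 := by
    rw [lt_div_iff₀ (by positivity)] at hε
    nlinarith
  -- key pointwise bound: x^(2k) ≤ 4^k * ((x-r)^(2k) + r^(2k))
  set a := |x - r| with ha
  have ha0 : 0 ≤ a := abs_nonneg _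
  have hxa : x ^ (2 * k) ≤ (a + r) ^ (2 * k) := by
    calc x ^ (2 * k) = |x| ^ (2 * k) := (heven.pow_abs x).symm
      _ ≤ (a + r) ^ (2 * k) := by
          apply pow_le_pow_left₀ (abs_nonneg x)
          calc |x| = |(x - r) + r| := by ring_nf
            _ ≤ |x - r| + |r| := abs_add_le _ _
            _ = a + r := by rw [abs_of_pos hr]
  have hmax : (a + r) ^ (2 * k) ≤ 4 ^ k * (a ^ (2 * k) + r ^ (2 * k)) := by
    have h1 : a + r ≤ 2 * max a r := by
      have := le_max_left a r
      have := le_max_right a r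
      linarith
    calc (a + r) ^ (2 * k) ≤ (2 * max a r) ^ (2 * k) :=
          pow_le_pow_left₀ (by positivity) h1 _
      _ = 4 ^ k * (max a r) ^ (2 * k) := by
          rw [mul_pow, pow_mul]; norm_num
      _ ≤ 4 ^ k * (a ^ (2 * k) + r ^ (2 * k)) := by
          gcongr
          rcases max_cases a r with ⟨h, _⟩ | ⟨h, _⟩ <;> rw [h] <;> nlinarith [pow_nonneg ha0 (2*k), pow_nonneg hr.le (2*k)]
  have hapow : a ^ (2 * k) = (x - r) ^ (2 * k) := heven.pow_abs (x - r)
  have h4 : (4:ℝ) ≤ 4 ^ k := by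
    calc (4:ℝ) = 4 ^ 1 := (pow_one 4).symm
      _ ≤ 4 ^ k := pow_le_pow_right₀ (by norm_num) hk
  have hBA : 1 + ε * x ^ (2 * k) ≤ 4 ^ k * (1 + ε * (x - r) ^ (2 * k)) := by
    have h2 : ε * x ^ (2 * k) ≤ 4 ^ k * (ε * (x - r) ^ (2 * k)) + 4 ^ k * (ε * r ^ (2 * k)) := by
      have := mul_le_mul_of_nonneg_left (hxa.trans hmax) hε0.le
      rw [hapow] at this
      nlinarith
    nlinarith [mul_nonneg (mul_nonneg (le_trans (by norm_num) h4) hε0.le) hy0]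
  rw [div_le_div_iff₀ (by positivity) (by positivity)]
  have h16 : (16:ℝ) ^ k = 4 ^ k * 4 ^ k := by
    rw [← mul_pow]; norm_num
  nlinarith [mul_le_mul hBA hBA hB0.le (by positivity : (0:ℝ) ≤ 4 ^ k * (1 + ε * (x - r) ^ (2 * k)))]
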